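/- In ℚ^4 with standard basis e_1, e_2, e_3, e_4, define the type F_4 simple roots α_1 = e_2 − e_3, α_2 = e_3 − e_4, α_3 = e_4, α_4 = (e_1 − e_2 − e_3 − e_4)/2, and the fundamental weights ϖ_1 = e_1 + e_2, ϖ_2 = 2e_1 + e_2 + e_3, ϖ_3 = (3e_1 + e_2 + e_3 + e_4)/2, ϖ_4 = e_1. Let p be a prime, r ≥ 1 an integer, and j ∈ {1, 2, 3, 4}. Then there exist nonnegative rationals q_1, q_2, q_3, q_4 with ϖ_j − p^r·ϖ_4 = q_1α_1 + q_2α_2 + q_3α_3 + q_4α_4 if and only if p = 2, r = 1, and j = 2. -/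
import Mathlib


/-- The type `F₄` simple roots `α₁ = e₂ - e₃`, `α₂ = e₃ - e₄`, `α₃ = e₄`,
`α₄ = (e₁ - e₂ - e₃ - e₄)/2` in `ℚ⁴`. -/
def simpleF4 : Fin 4 → (Fin 4 → ℚ) :=
  ![![0, 1, -1, 0], ![0, 0, 1, -1], ![0, 0, 0, 1], ![1/2, -1/2, -1/2, -1/2]]

/-- The type `F₄` fundamental weights `ϖ₁ = e₁ + e₂`, `ϖ₂ = 2e₁ + e₂ + e₃`,
`ϖ₃ = (3e₁ + e₂ + e₃ + e₄)/2`, `ϖ₄ = e₁` in `ℚ⁴`. -/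
def fundF4 : Fin 4 → (Fin 4 → ℚ) :=
  ![![1, 1, 0, 0], ![2, 1, 1, 0], ![3/2, 1/2, 1/2, 1/2], ![1, 0, 0, 0]]

/-- For `p` prime, `r ≥ 1`, and a fundamental weight `ϖ_j` of `F₄`, one can write
`ϖ_j - p^r • ϖ₄` as a nonnegative rational combination of the simple roots if and only if
`p = 2`, `r = 1`, and `j = 2` (i.e. the index `1` in the `0`-based indexing of `Fin 4`). -/
theorem f4_pr_fund4_le_Q_fund_iff (p r : ℕ) (hp : p.Prime) (hr : 1 ≤ r) (j : Fin 4) :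
    (∃ q : Fin 4 → ℚ, (∀ i, 0 ≤ q i) ∧
        fundF4 j - (p ^ r : ℚ) • fundF4 3 = ∑ i, q i • simpleF4 i) ↔
      (p = 2 ∧ r = 1 ∧ j = 1) := by
  have hc : (2 : ℚ) ≤ (p : ℚ) ^ r := by
    have h2 : 2 ≤ p := hp.two_le
    have : (2:ℕ) ≤ p ^ r := le_trans h2 (Nat.le_self_pow (by omega) p)
    exact_mod_cast this
  constructor
  · rintro ⟨q, hq, heq⟩
    have h0 := congrFun heq 0
    have h1 := congrFun heq 1
    have h2 := congrFun heq 2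
    have h3 := congrFun heq 3
    have hq0 := hq 0; have hq1 := hq 1; have hq2 := hq 2; have hq3 := hq 3
    fin_cases j <;>
      simp [fundF4, simpleF4, Fin.sum_univ_four, Pi.sub_apply, Pi.smul_apply,
        smul_eq_mul] at h0 h1 h2 h3
    · linarith
    · have hpe : (p : ℚ) ^ r = 2 := by linarith
      have hpn : p ^ r = 2 := by exact_mod_cast hpe
      have hp2 : p = 2 := by
        have hdvd : p ∣ 2 := hpn ▸ dvd_pow_self p (by omega)
        have := (Nat.prime_dvd_prime_iff_eq hp Nat.prime_two).mp hdvd; exact this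
      subst hp2
      refine ⟨rfl, ?_, rfl⟩
      have : 2 ^ r = 2 ^ 1 := by simpa using hpn
      exact Nat.pow_right_injective (le_refl 2) this
    · linarith
    · linarith
  · rintro ⟨hp2, hr1, hj⟩
    subst hp2; subst hr1; subst hj
    refine ⟨![1, 2, 2, 0], ?_, ?_⟩
    · intro i; fin_cases i <;> norm_num
    · funext i
      fin_cases i <;>
        simp [fundF4, simpleF4, Fin.sum_univ_four] <;> norm_num
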